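/- arXiv:1204.2306 — 2 statements merged into one kernel-verified Lean document; each statement's English description precedes it below -/
import Mathlib

section
/- Let T be a tree with ℓ leaves and h heavy edges. If T is not a single vertex, then ℓ − h − 1 ≤ P(T) ≤ ℓ − 1. -/
namespace PaperPC

open SimpleGraph

variable {V : Type*}

/-- The degree of a vertex, via the cardinality of its neighbor set. -/
noncomputable def ndeg (G : SimpleGraph V) (v : V) : ℕ := (G.neighborSet v).ncard

/-- A linear forest: an acyclic graph of maximum degree at most 2,
i.e. a vertex-disjoint union of paths.  A spanning linear subforest of `G`
is exactly a path covering of `G` (isolated vertices are one-vertex paths). -/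
def IsLinearForest (H : SimpleGraph V) : Prop :=
  H.IsAcyclic ∧ ∀ v, ndeg H v ≤ 2

/-- The number of paths of a path covering = number of connected components. -/
noncomputable def numPaths (H : SimpleGraph V) : ℕ := Nat.card H.ConnectedComponent

/-- The path covering number `P(G)`. -/
noncomputable def pathCoverNumber (G : SimpleGraph V) : ℕ :=
  sInf {k | ∃ H ≤ G, IsLinearForest H ∧ numPaths H = k}

/-- `H` is a minimum path covering of `G`. -/
def IsMinPathCover (G H : SimpleGraph V) : Prop :=
  H ≤ G ∧ IsLinearForest H ∧ numPaths H = pathCoverNumber G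

open scoped Classical in
/-- The path sequence of a path covering: the multiset of the numbers of vertices
of its paths (a multiset encodes the nondecreasing ordered sequence). -/
noncomputable def pathSeq [Fintype V] (H : SimpleGraph V) : Multiset ℕ :=
  (Finset.univ : Finset H.ConnectedComponent).val.map fun c => c.supp.ncard

/-- `G` admits a unique path sequence. -/
def UniquePathSequence [Fintype V] (G : SimpleGraph V) : Prop :=
  ∀ H₁ H₂ : SimpleGraph V, IsMinPathCover G H₁ → IsMinPathCover G H₂ →
    pathSeq H₁ = pathSeq H₂

/-- Number of leaves (vertices of degree 1). -/
noncomputable def numLeaves (G : SimpleGraph V) : ℕ := {v | ndeg G v = 1}.ncard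

/-- Number of heavy edges (edges both of whose endpoints have degree > 2). -/
noncomputable def numHeavyEdges (G : SimpleGraph V) : ℕ :=
  {e ∈ G.edgeSet | ∀ v ∈ e, 2 < ndeg G v}.ncard

/-- Number of edges. -/
noncomputable def numEdges (G : SimpleGraph V) : ℕ := G.edgeSet.ncard

/-- A graph is 2-sparse if no two adjacent vertices both have degree > 2. -/
def TwoSparse (G : SimpleGraph V) : Prop :=
  ∀ u v, G.Adj u v → ndeg G u ≤ 2 ∨ ndeg G v ≤ 2

/-- `G` is a path graph. -/
def IsPathGraph (G : SimpleGraph V) : Prop := G.IsTree ∧ ∀ v, ndeg G v ≤ 2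

/-- `G` is a cycle graph. -/
def IsCycleGraph (G : SimpleGraph V) : Prop := G.Connected ∧ ∀ v, ndeg G v = 2

/-- A generalized star: a tree with exactly one heavy vertex (the center) in which
all vines have the same number of vertices (equivalently, all leaves are at the same
distance from the center). -/
def IsGenStar (G : SimpleGraph V) : Prop :=
  G.IsTree ∧ ∃ c k, 2 < ndeg G c ∧ (∀ v, v ≠ c → ndeg G v ≤ 2) ∧
    ∀ v, ndeg G v = 1 → G.dist c v = k

/-- An L(2,1)-labeling. -/
def IsL21Labeling (G : SimpleGraph V) (f : V → ℕ) : Prop :=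
  (∀ u v, G.Adj u v → 2 ≤ Nat.dist (f u) (f v)) ∧
  (∀ u v, G.dist u v = 2 → 1 ≤ Nat.dist (f u) (f v))

/-- `λ(G)`: the least `k` such that `G` has an L(2,1)-labeling with labels in `{0,…,k}`. -/
noncomputable def lambdaNum (G : SimpleGraph V) : ℕ :=
  sInf {k | ∃ f : V → ℕ, IsL21Labeling G f ∧ ∀ v, f v ≤ k}

/-- A λ-labeling: an L(2,1)-labeling with maximum label `λ(G)`. -/
def IsLambdaLabeling (G : SimpleGraph V) (f : V → ℕ) : Prop :=
  IsL21Labeling G f ∧ (∀ v, f v ≤ lambdaNum G) ∧ ∃ v, f v = lambdaNum G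

/-- The set of holes of a labeling: unused labels `h` with `1 ≤ h ≤ λ(G) - 1`. -/
def labHoles (G : SimpleGraph V) (f : V → ℕ) : Set ℕ :=
  {h | 1 ≤ h ∧ h + 1 ≤ lambdaNum G ∧ ∀ v, f v ≠ h}

/-- The hole index `ρ(G)`: minimum number of holes over all λ-labelings. -/
noncomputable def holeIndex (G : SimpleGraph V) : ℕ :=
  sInf {k | ∃ f : V → ℕ, IsLambdaLabeling G f ∧ (labHoles G f).ncard = k}

open scoped Classical in
/-- The island sequence of a labeling: the multiset of cardinalities of the maximal
intervals `[a,b]` of consecutive integers all used by the labeling. -/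
noncomputable def islandSeq [Fintype V] (G : SimpleGraph V) (f : V → ℕ) : Multiset ℕ :=
  (((Finset.range (lambdaNum G + 1)) ×ˢ (Finset.range (lambdaNum G + 1))).filter
    (fun q => q.1 ≤ q.2 ∧ (∀ x ∈ Finset.Icc q.1 q.2, ∃ v, f v = x) ∧
      (q.1 = 0 ∨ ∀ v, f v ≠ q.1 - 1) ∧ ∀ v, f v ≠ q.2 + 1)).val.map
    fun q => q.2 - q.1 + 1

/-- `G` admits (at least) two distinct island sequences. -/
def MultipleIslandSequences [Fintype V] (G : SimpleGraph V) : Prop :=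
  ∃ f g : V → ℕ, IsLambdaLabeling G f ∧ IsLambdaLabeling G g ∧
    (labHoles G f).ncard = holeIndex G ∧ (labHoles G g).ncard = holeIndex G ∧
    islandSeq G f ≠ islandSeq G g

/-- A vine: a maximal path one of whose endpoints (`a`) is a leaf and all of whose
vertices are light.  Maximality: any light vertex adjacent to the other end already
lies on the path. -/
def IsVine (G : SimpleGraph V) {a b : V} (p : G.Walk a b) : Prop :=
  p.IsPath ∧ ndeg G a = 1 ∧ (∀ v ∈ p.support, ndeg G v ≤ 2) ∧
  ∀ c, G.Adj b c → ndeg G c ≤ 2 → c ∈ p.support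

/-- A vine with center `v`: the (heavy) vertex adjacent to the non-leaf end of the vine. -/
def IsVineWithCenter (G : SimpleGraph V) {a b : V} (p : G.Walk a b) (v : V) : Prop :=
  IsVine G p ∧ G.Adj b v ∧ 2 < ndeg G v

/-- The matching number of the subgraph of `G` induced by `S`. -/
noncomputable def matchingNumberOn (G : SimpleGraph V) (S : Set V) : ℕ :=
  sSup {k | ∃ M : Set (Sym2 V), M ⊆ G.edgeSet ∧ (∀ e ∈ M, ∀ v ∈ e, v ∈ S) ∧
    (∀ e ∈ M, ∀ f ∈ M, e ≠ f → ∀ v, v ∈ e → v ∉ f) ∧ M.ncard = k}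

/-- Labels used in the family `F`: `A`, or `B k` where `k` records the number of
vertices of each vine of the labeled generalized star that produced the label. -/
inductive Lab | A | B (k : ℕ)

/-- A labeled generalized star with center `c` whose vines have `k` vertices each
(equivalently, every leaf is at distance `k` from `c`); the degenerate case
`deg c = 2` is the convention regarding a path of length `2k` as a labeled
generalized star with two vines.  The neighbors of the center are labeled `B k`,
the other non-leaf vertices (and the center) are labeled `A`, leaves are unlabeled. -/
def IsLGenStar {W : Type*} (H : SimpleGraph W) (c : W) (k : ℕ)
    (lab : W → Option Lab) : Prop :=
  H.IsTree ∧ 2 ≤ ndeg H c ∧ (∀ v, v ≠ c → ndeg H v ≤ 2) ∧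
  (∀ v, ndeg H v = 1 → H.dist c v = k) ∧
  lab c = some Lab.A ∧
  (∀ v, H.Adj c v → lab v = some (Lab.B k)) ∧
  (∀ v, v ≠ c → ¬H.Adj c v → ndeg H v = 1 → lab v = none) ∧
  (∀ v, v ≠ c → ¬H.Adj c v → 2 ≤ ndeg H v → lab v = some Lab.A)

/-- A labeled path: a path with at least three vertices, non-leaf vertices labeled `A`. -/
def IsLPath {W : Type*} (H : SimpleGraph W) (lab : W → Option Lab) : Prop :=
  H.IsTree ∧ (∀ v, ndeg H v ≤ 2) ∧ 3 ≤ Nat.card W ∧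
  (∀ v, ndeg H v = 1 → lab v = none) ∧
  ∀ v, 2 ≤ ndeg H v → lab v = some Lab.A

/-- The induced subgraph of `T` on `s` is a labeled generalized star. -/
def LGenStarOn (T : SimpleGraph V) (s : Set V) (c : V) (k : ℕ)
    (lab : V → Option Lab) : Prop :=
  ∃ hc : c ∈ s, IsLGenStar (T.induce s) ⟨c, hc⟩ k fun v => lab v.1

/-- The induced subgraph of `T` on `s` is a labeled path. -/
def LPathOn (T : SimpleGraph V) (s : Set V) (lab : V → Option Lab) : Prop :=
  IsLPath (T.induce s) fun v => lab v.1

/-- The family `F` of labeled trees, realized as induced subgraphs (on vertex sets `s`)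
of an ambient graph `T`:  start from a labeled generalized star with at least three
vines or from a labeled path, and repeatedly attach, via a single new edge, a labeled
generalized star with at least three vines at a vertex labeled `A` (Type-1), a labeled
path by one of its non-leaf vertices at a vertex labeled `A` (Type-2), or a labeled
generalized star whose vines have the same number of vertices `k` as those of the star
that labeled `u` with `B k`, at a vertex `u` labeled `B k` (Type-3). -/
inductive InF (T : SimpleGraph V) : Set V → (V → Option Lab) → Prop
  | base_star (s : Set V) (c : V) (k : ℕ) (lab : V → Option Lab) :
      LGenStarOn T s c k lab → 3 ≤ {w ∈ s | T.Adj c w}.ncard → InF T s lab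
  | base_path (s : Set V) (lab : V → Option Lab) :
      LPathOn T s lab → InF T s lab
  | type1 (s : Set V) (lab : V → Option Lab) (t : Set V) (lab' : V → Option Lab)
      (u c : V) (k : ℕ) :
      InF T s lab → Disjoint s t → u ∈ s → c ∈ t → lab u = some Lab.A →
      LGenStarOn T t c k lab' → 3 ≤ {w ∈ t | T.Adj c w}.ncard →
      (∀ x ∈ s, ∀ y ∈ t, (T.Adj x y ↔ x = u ∧ y = c)) →
      (∀ x ∈ s, lab' x = lab x) →
      InF T (s ∪ t) lab'
  | type2 (s : Set V) (lab : V → Option Lab) (t : Set V) (lab' : V → Option Lab)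
      (u v : V) :
      InF T s lab → Disjoint s t → u ∈ s → v ∈ t → lab u = some Lab.A →
      LPathOn T t lab' → 2 ≤ {w ∈ t | T.Adj v w}.ncard →
      (∀ x ∈ s, ∀ y ∈ t, (T.Adj x y ↔ x = u ∧ y = v)) →
      (∀ x ∈ s, lab' x = lab x) →
      InF T (s ∪ t) lab'
  | type3 (s : Set V) (lab : V → Option Lab) (t : Set V) (lab' : V → Option Lab)
      (u c : V) (k : ℕ) :
      InF T s lab → Disjoint s t → u ∈ s → c ∈ t → lab u = some (Lab.B k) →
      LGenStarOn T t c k lab' →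
      (∀ x ∈ s, ∀ y ∈ t, (T.Adj x y ↔ x = u ∧ y = c)) →
      (∀ x ∈ s, lab' x = lab x) →
      InF T (s ∪ t) lab'

/-- `G` is obtained from the tree `T` by expanding each edge of `T` into a complete
graph of arbitrary order: there is an embedding `ι` of the vertices of `T` and an
assignment `b` of a block of vertices of `G` to each edge of `T` such that an original
vertex lies in the block of an edge iff it is an endpoint of that edge, blocks of
distinct edges meet only in original vertices, every vertex of `G` lies in some block,
and two distinct vertices of `G` are adjacent iff they lie in a common block. -/
def IsBlockExpansion {U W : Type*} (T : SimpleGraph U) (G : SimpleGraph W) : Prop :=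
  ∃ (ι : U ↪ W) (b : Sym2 U → Set W),
    (∀ (u : U), ∀ e ∈ T.edgeSet, (ι u ∈ b e ↔ u ∈ e)) ∧
    (∀ e ∈ T.edgeSet, ∀ f ∈ T.edgeSet, e ≠ f → b e ∩ b f ⊆ Set.range ι) ∧
    (∀ w : W, ∃ e ∈ T.edgeSet, w ∈ b e) ∧
    (∀ x y : W, G.Adj x y ↔ x ≠ y ∧ ∃ e ∈ T.edgeSet, x ∈ b e ∧ y ∈ b e)

end PaperPC

/-!
Deleting `k` edges from a tree leaves a forest with exactly `k + 1` components, so a path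
covering inside the tree `T` with `P` paths is obtained by deleting `P - 1` edges. For a tree on
at least two vertices the handshake lemma gives `ℓ - 2 = ∑ v, (deg v - 2)`, the sum of the
excess degrees. Deleting `deg v - 2` edges at every heavy vertex leaves a linear forest, hence
`P(T) ≤ ℓ - 1`. Conversely, a linear forest keeps at most two edges at each vertex, so the
deleted edges meet each heavy vertex `v` at least `deg v - 2` times; a deleted edge is counted
twice only if it is heavy, hence `ℓ - 2 ≤ (P(T) - 1) + h`.
-/

open Finset

namespace SimpleGraph

variable {V : Type*} {G : SimpleGraph V}

theorem Reachable.reachable_deleteEdges_or {u v : V} (h : G.Reachable u v) (a b : V) :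
    (G.deleteEdges {s(a, b)}).Reachable u v ∨ (G.deleteEdges {s(a, b)}).Reachable u a ∨
      (G.deleteEdges {s(a, b)}).Reachable u b := by
  obtain ⟨p⟩ := h
  induction p with
  | nil => exact .inl .rfl
  | @cons x y z hxy q ih =>
    by_cases he : s(x, y) = s(a, b)
    · rcases Sym2.eq_iff.mp he with ⟨rfl, -⟩ | ⟨rfl, -⟩
      · exact .inr (.inl .rfl)
      · exact .inr (.inr .rfl)
    · have hxy' : (G.deleteEdges {s(a, b)}).Adj x y := by simp [hxy, he]
      exact ih.imp hxy'.reachable.trans (Or.imp hxy'.reachable.trans hxy'.reachable.trans)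

theorem IsBridge.card_connectedComponent_deleteEdges [Finite V] {a b : V} (hab : G.Adj a b)
    (hbr : G.IsBridge s(a, b)) :
    Nat.card (G.deleteEdges {s(a, b)}).ConnectedComponent = Nat.card G.ConnectedComponent + 1 := by
  classical
  set G' := G.deleteEdges {s(a, b)}
  -- Every component of `G` is the image of exactly one component of `G'` other than that of `b`.
  let φ : {c : G'.ConnectedComponent // c ≠ G'.connectedComponentMk b} →
      G.ConnectedComponent :=
    fun c => c.1.map (Hom.ofLE (deleteEdges_le _))
  have hφ : Function.Bijective φ := by
    constructor
    · rintro ⟨c, hc⟩ ⟨d, hd⟩ hcd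
      induction c using ConnectedComponent.ind with | _ u => ?_
      induction d using ConnectedComponent.ind with | _ v => ?_
      change G.connectedComponentMk u = G.connectedComponentMk v at hcd
      simp only [ConnectedComponent.eq, ne_eq, Subtype.mk.injEq] at hcd hc hd ⊢
      rcases hcd.reachable_deleteEdges_or a b with huv | hua | hub
      · exact huv
      · rcases hcd.symm.reachable_deleteEdges_or a b with hvu | hva | hvb
        · exact hvu.symm
        · exact hua.trans hva.symm
        · exact absurd hvb hd
      · exact absurd hub hc
    · intro c
      induction c using ConnectedComponent.ind with | _ v => ?_
      by_cases hv : G'.connectedComponentMk v = G'.connectedComponentMk b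
      · refine ⟨⟨G'.connectedComponentMk a, fun h => hbr (ConnectedComponent.exact h)⟩, ?_⟩
        change G.connectedComponentMk a = G.connectedComponentMk v
        rw [ConnectedComponent.eq] at hv ⊢
        exact hab.reachable.trans (hv.mono (deleteEdges_le _)).symm
      · exact ⟨⟨_, hv⟩, rfl⟩
  rw [← Nat.card_eq_of_bijective φ hφ, ← Finite.card_option,
    Nat.card_congr (Equiv.optionSubtypeNe _)]

theorem IsAcyclic.card_connectedComponent_deleteEdges [Finite V] (hG : G.IsAcyclic)
    {s : Set (Sym2 V)} (hs : s ⊆ G.edgeSet) :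
    Nat.card (G.deleteEdges s).ConnectedComponent = Nat.card G.ConnectedComponent + s.ncard := by
  classical
  obtain ⟨t, rfl⟩ := s.toFinite.exists_finset_coe
  induction t using Finset.induction_on with
  | empty => simp
  | @insert e t he ih =>
    induction e using Sym2.ind with | _ a b => ?_
    rw [Finset.coe_insert] at hs ⊢
    have hab : (G.deleteEdges t).Adj a b := by
      simpa [he] using hs (Set.mem_insert _ _)
    have hbr : (G.deleteEdges t).IsBridge s(a, b) :=
      isAcyclic_iff_forall_adj_isBridge.mp (hG.anti (deleteEdges_le _)) hab
    rw [← Set.union_singleton, ← deleteEdges_deleteEdges,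
      hbr.card_connectedComponent_deleteEdges hab, ih ((Set.subset_insert _ _).trans hs),
      Set.union_singleton, Set.ncard_insert_of_notMem (by simpa using he), add_assoc]

theorem IsTree.card_connectedComponent_of_le [Finite V] {T H : SimpleGraph V} (hT : T.IsTree)
    (hH : H ≤ T) : Nat.card H.ConnectedComponent = (T.edgeSet \ H.edgeSet).ncard + 1 := by
  have : Subsingleton T.ConnectedComponent :=
    hT.connected.preconnected.subsingleton_connectedComponent
  have : Nonempty T.ConnectedComponent := ⟨T.connectedComponentMk hT.connected.nonempty.some⟩
  have h := hT.isAcyclic.card_connectedComponent_deleteEdges (Set.sdiff_subset (t := H.edgeSet))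
  rw [deleteEdges_sdiff_eq_of_le hH] at h
  rw [h, Nat.card_unique, add_comm]

theorem card_filter_mem_le_one_add [DecidableEq V] (s : Finset V) (e : Sym2 V) :
    #{v ∈ s | v ∈ e} ≤ 1 + if e ∈ s.sym2 then 1 else 0 := by
  induction e using Sym2.ind with | _ x y => ?_
  split_ifs with h
  all_goals rw [mem_sym2_iff] at h
  · calc #{v ∈ s | v ∈ s(x, y)} ≤ #{x, y} := card_le_card fun v hv => by
          simp only [mem_filter, Sym2.mem_iff] at hv; simp [hv.2]
      _ ≤ 2 := card_le_two
  · rw [add_zero, card_le_one]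
    simp only [mem_filter, Sym2.mem_iff]
    grind

theorem sum_degree_le_card_edgeFinset_add [Fintype V] [DecidableEq V] [DecidableRel G.Adj]
    [Fintype G.edgeSet] (s : Finset V) :
    ∑ v ∈ s, G.degree v ≤ #G.edgeFinset + #(G.edgeFinset ∩ s.sym2) := by
  have hdouble : ∑ v ∈ s, G.degree v = ∑ e ∈ G.edgeFinset, #{v ∈ s | v ∈ e} := by
    simp_rw [← card_incidenceFinset_eq_degree, incidenceFinset_eq_filter]
    exact sum_card_bipartiteAbove_eq_sum_card_bipartiteBelow (r := fun v e => v ∈ e)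
  rw [hdouble, ← filter_mem_eq_inter, card_filter, card_eq_sum_ones, ← sum_add_distrib]
  exact sum_le_sum fun e _ => card_filter_mem_le_one_add s e

theorem IsTree.sum_degree_sub_two_add_two [Fintype V] [DecidableRel G.Adj] [Nontrivial V]
    (hG : G.IsTree) : ∑ v, (G.degree v - 2) + 2 = #{v | G.degree v = 1} := by
  have hv (v : V) : G.degree v - 2 + 2 = G.degree v + if G.degree v = 1 then 1 else 0 := by
    have := hG.connected.preconnected.degree_pos_of_nontrivial v
    split_ifs <;> omega
  have hsum : ∑ v, (G.degree v - 2) + 2 * Fintype.card V =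
      2 * #G.edgeFinset + #{v | G.degree v = 1} := by
    rw [card_filter, ← sum_degrees_eq_twice_card_edges, ← sum_add_distrib,
      ← Finset.sum_congr rfl fun v _ => hv v, sum_add_distrib]
    simp [mul_comm]
  have := hG.card_edgeFinset
  omega

end SimpleGraph

namespace PaperPC

open SimpleGraph

variable {V : Type*} {G T H : SimpleGraph V}

theorem ndeg_eq_degree (G : SimpleGraph V) (v : V) [Fintype (G.neighborSet v)] :
    ndeg G v = G.degree v := by
  rw [ndeg, Set.ncard_eq_toFinset_card']
  rfl

theorem numLeaves_eq_card_filter [Fintype V] [DecidableRel G.Adj] :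
    numLeaves G = #{v | G.degree v = 1} := by
  simp [numLeaves, ndeg_eq_degree, Set.ncard_eq_toFinset_card']

theorem card_inter_sym2_le_numHeavyEdges [Fintype V] [DecidableEq V] [DecidableRel T.Adj]
    [Fintype H.edgeSet] (hH : H ≤ T) :
    #(H.edgeFinset ∩ ({v | 2 < T.degree v} : Finset V).sym2) ≤ numHeavyEdges T := by
  rw [numHeavyEdges, ← Set.ncard_coe_finset]
  refine Set.ncard_le_ncard (fun e he => ?_) (Set.toFinite _)
  simp only [coe_inter, coe_edgeFinset, Set.mem_inter_iff, mem_coe, mem_sym2_iff, mem_filter,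
    mem_univ, true_and] at he
  exact ⟨edgeSet_mono hH he.1, fun v hv => (ndeg_eq_degree T v).symm ▸ he.2 v hv⟩

theorem pathCoverNumber_le (hH : H ≤ G) (hlin : IsLinearForest H) :
    pathCoverNumber G ≤ numPaths H :=
  Nat.sInf_le ⟨H, hH, hlin, rfl⟩

theorem exists_isMinPathCover (G : SimpleGraph V) : ∃ H, IsMinPathCover G H := by
  have hbot : IsLinearForest (⊥ : SimpleGraph V) := ⟨isAcyclic_bot, fun v => by simp [ndeg]⟩
  obtain ⟨H, hH, hlin, hP⟩ := Nat.sInf_mem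
    (s := {k | ∃ H ≤ G, IsLinearForest H ∧ numPaths H = k}) ⟨_, ⊥, bot_le, hbot, rfl⟩
  exact ⟨H, hH, hlin, hP⟩

theorem sum_degree_sub_two_le [Fintype V] [DecidableRel T.Adj]
    (hdeg : ∀ v, ndeg H v ≤ 2) :
    ∑ v, (T.degree v - 2) ≤ (T.edgeSet \ H.edgeSet).ncard + numHeavyEdges T := by
  classical
  set D := T \ H
  have hD (v : V) : T.degree v - 2 ≤ D.degree v := by
    have hsub : T.neighborSet v ⊆ H.neighborSet v ∪ D.neighborSet v := fun w hw => by
      by_cases h : H.Adj v w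
      exacts [.inl h, .inr ⟨hw, h⟩]
    have h : ndeg T v ≤ ndeg H v + ndeg D v :=
      (Set.ncard_le_ncard hsub).trans (Set.ncard_union_le _ _)
    rw [ndeg_eq_degree T, ndeg_eq_degree D] at h
    have := hdeg v
    omega
  calc ∑ v, (T.degree v - 2) = ∑ v with 2 < T.degree v, (T.degree v - 2) :=
        (sum_filter_of_ne fun v _ h => by omega).symm
    _ ≤ ∑ v with 2 < T.degree v, D.degree v := sum_le_sum fun v _ => hD v
    _ ≤ #D.edgeFinset + #(D.edgeFinset ∩ ({v | 2 < T.degree v} : Finset V).sym2) :=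
        D.sum_degree_le_card_edgeFinset_add _
    _ ≤ (T.edgeSet \ H.edgeSet).ncard + numHeavyEdges T := by
        gcongr
        · rw [← Set.ncard_coe_finset, coe_edgeFinset, edgeSet_sdiff]
        · exact card_inter_sym2_le_numHeavyEdges sdiff_le

theorem exists_isLinearForest_le [Fintype V] [DecidableRel G.Adj] (hG : G.IsAcyclic) :
    ∃ H ≤ G, IsLinearForest H ∧
      (G.edgeSet \ H.edgeSet).ncard ≤ ∑ v, (G.degree v - 2) := by
  classical
  choose cut hcut hcard using fun v =>
    le_card_iff_exists_subset_card.mp (by simp : G.degree v - 2 ≤ #(G.neighborFinset v))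
  set cutEdges : Finset (Sym2 V) := univ.biUnion fun v => (cut v).image (s(v, ·))
  refine ⟨G.deleteEdges cutEdges, deleteEdges_le _,
    ⟨hG.anti (deleteEdges_le _), fun v => ?_⟩, ?_⟩
  · have hsub : (G.deleteEdges cutEdges).neighborSet v ⊆ ↑(G.neighborFinset v \ cut v) :=
      fun w ⟨hvw, hw⟩ => by
        simp only [coe_sdiff, Set.mem_sdiff, mem_coe, mem_neighborFinset]
        refine ⟨hvw, fun hwc => hw ?_⟩
        simpa [cutEdges] using ⟨⟨v, w, hwc, .inl ⟨rfl, rfl⟩⟩, hvw.ne⟩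
    calc ndeg (G.deleteEdges cutEdges) v ≤ #(G.neighborFinset v \ cut v) :=
          (Set.ncard_le_ncard hsub).trans (Set.ncard_coe_finset _).le
      _ ≤ 2 := by rw [card_sdiff_of_subset (hcut v), hcard, card_neighborFinset_eq_degree]; omega
  · calc (G.edgeSet \ (G.deleteEdges cutEdges).edgeSet).ncard
          ≤ (cutEdges : Set (Sym2 V)).ncard :=
          Set.ncard_le_ncard (by simp [edgeSet_deleteEdges])
      _ ≤ ∑ v, #(cut v) := by
          rw [Set.ncard_coe_finset]
          exact card_biUnion_le.trans (sum_le_sum fun v _ => card_image_le)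
      _ = ∑ v, (G.degree v - 2) := by simp_rw [hcard]

/-- **Theorem (Statement 0).** Let `T` be a tree with `ℓ` leaves and `h` heavy edges.
If `T` is not a single vertex, then `ℓ − h − 1 ≤ P(T) ≤ ℓ − 1`. -/
theorem tree_pathCoverNumber_bounds {V : Type*} [Fintype V] (T : SimpleGraph V)
    (hT : T.IsTree) (h1 : Fintype.card V ≠ 1) :
    (numLeaves T : ℤ) - numHeavyEdges T - 1 ≤ pathCoverNumber T ∧
    (pathCoverNumber T : ℤ) ≤ numLeaves T - 1 := by
  classical
  have : Nontrivial V := by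
    have := hT.connected.nonempty
    rw [← Fintype.one_lt_card_iff_nontrivial]
    have := Fintype.card_pos (α := V)
    omega
  have hleaves := hT.sum_degree_sub_two_add_two
  rw [← numLeaves_eq_card_filter] at hleaves
  obtain ⟨H, hHT, hH, hcut⟩ := exists_isLinearForest_le hT.isAcyclic
  obtain ⟨H₀, hH₀T, hH₀, hP⟩ := exists_isMinPathCover T
  have hupper := pathCoverNumber_le hHT hH
  have hlower := sum_degree_sub_two_le (T := T) hH₀.2
  rw [numPaths, hT.card_connectedComponent_of_le hHT] at hupper
  rw [numPaths, hT.card_connectedComponent_of_le hH₀T] at hP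
  omega

end PaperPC
end

section
/- Let S be a vine of a graph G. Then S is a subgraph of every minimum path covering of G; that is, in every path covering of G with P(G) paths, the edges of S all lie on paths of the covering. -/
namespace PaperPC

open SimpleGraph

variable {V : Type*}

/-! Every edge `xy` of a vine is a bridge of `G`: the part of the vine on the leaf side of `xy`
is closed under adjacency in `G - xy`, because its vertices are light and its end is a leaf.
If a minimum path covering `H` missed `xy`, then `x` and `y` would lie on different paths of
`H` (a bridge of `G` cannot be bypassed in `H ≤ G`), and since `x` and `y` are light, joining
these two paths by `xy` would give a path covering with fewer paths. -/

section PathCovers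

variable {G H : SimpleGraph V} {u v w x y : V}

theorem ndeg_le_ndeg_of_le [Finite V] (h : H ≤ G) (v : V) : ndeg H v ≤ ndeg G v :=
  Set.ncard_le_ncard fun _ hw => h hw

theorem ndeg_sup_edge_of_ne (hx : v ≠ x) (hy : v ≠ y) : ndeg (H ⊔ edge x y) v = ndeg H v := by
  unfold ndeg
  congr 1
  ext w
  simp [edge_adj, hx, hy]

theorem neighborSet_eq_singleton_of_ndeg_eq_one (h : ndeg G v = 1) (hu : G.Adj v u) :
    G.neighborSet v = {u} := by
  obtain ⟨c, hc⟩ := Set.ncard_eq_one.mp h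
  have huc : u ∈ G.neighborSet v := hu
  rw [hc, Set.mem_singleton_iff] at huc
  rw [hc, huc]

theorem neighborSet_eq_pair_of_ndeg_le_two [Finite V] (h : ndeg G v ≤ 2) (hu : G.Adj v u)
    (hw : G.Adj v w) (huw : u ≠ w) : G.neighborSet v = {u, w} :=
  (Set.eq_of_subset_of_ncard_le (by rintro _ (rfl | rfl) <;> assumption)
    (by rwa [Set.ncard_pair huw])).symm

theorem mem_of_reachable_of_adj_closed {s : Set V} (hs : ∀ v ∈ s, ∀ w, G.Adj v w → w ∈ s)
    (hv : v ∈ s) (h : G.Reachable v w) : w ∈ s := by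
  obtain ⟨p⟩ := h
  induction p with
  | nil => exact hv
  | cons hadj _ ih => exact ih (hs _ hv _ hadj)

theorem IsLinearForest.sup_edge [Finite V] (hH : IsLinearForest H) (hxy : ¬H.Reachable x y)
    (hle : H ⊔ edge x y ≤ G) (hx : ndeg G x ≤ 2) (hy : ndeg G y ≤ 2) :
    IsLinearForest (H ⊔ edge x y) := by
  refine ⟨hH.1.sup_edge_of_not_reachable hxy, fun v => ?_⟩
  by_cases hvx : v = x
  · exact hvx ▸ (ndeg_le_ndeg_of_le hle x).trans hx
  by_cases hvy : v = y
  · exact hvy ▸ (ndeg_le_ndeg_of_le hle y).trans hy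
  rw [ndeg_sup_edge_of_ne hvx hvy]
  exact hH.2 v

theorem numPaths_sup_edge_lt [Finite V] (hxy : ¬H.Reachable x y) :
    numPaths (H ⊔ edge x y) < numPaths H := by
  have hne : x ≠ y := by
    rintro rfl
    exact hxy .rfl
  have := Fintype.ofFinite H.ConnectedComponent
  have := Fintype.ofFinite (H ⊔ edge x y).ConnectedComponent
  have hsurj := ConnectedComponent.surjective_map_ofLE (le_sup_left : H ≤ H ⊔ edge x y)
  have hninj : ¬(ConnectedComponent.map (Hom.ofLE (le_sup_left : H ≤ H ⊔ edge x y))).Injective :=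
    fun hinj => hxy <| ConnectedComponent.exact <| hinj <| ConnectedComponent.sound <|
      Adj.reachable (by simp [edge_adj, hne])
  simpa only [numPaths, Nat.card_eq_fintype_card] using
    Fintype.card_lt_of_surjective_not_injective _ hsurj hninj

theorem IsMinPathCover.reachable_of_adj [Finite V] (hH : IsMinPathCover G H) (hxy : G.Adj x y)
    (hx : ndeg G x ≤ 2) (hy : ndeg G y ≤ 2) : H.Reachable x y := by
  by_contra hnr
  have hle : H ⊔ edge x y ≤ G := sup_le hH.1 ((edge_le_iff _).mpr (Or.inr hxy))
  have hcover : pathCoverNumber G ≤ numPaths (H ⊔ edge x y) :=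
    Nat.sInf_le ⟨_, hle, hH.2.1.sup_edge hnr hle hx hy, rfl⟩
  have := numPaths_sup_edge_lt hnr
  have := hH.2.2
  omega

end PathCovers

section Vines

variable {G : SimpleGraph V}

theorem neighborSet_subset_support_of_isPath [Finite V] {u a : V} {q : G.Walk u a}
    (hq : q.IsPath) (ha : ndeg G a = 1) (hlight : ∀ v ∈ q.support, ndeg G v ≤ 2) :
    ∀ v ∈ q.support, v ≠ u → G.neighborSet v ⊆ {w | w ∈ q.support} := by
  induction q with
  | nil =>
    intro v hv hvu
    simp_all
  | @cons u u₁ a h q ih =>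
    intro v hv hvu
    have hv' : v ∈ q.support := by simpa [hvu] using hv
    by_cases hvu₁ : v = u₁
    · subst hvu₁
      cases q with
      | nil =>
        rw [neighborSet_eq_singleton_of_ndeg_eq_one ha h.symm]
        simp
      | cons h' q' =>
        have huq : u ∉ (Walk.cons h' q').support := (Walk.cons_isPath_iff _ _).mp hq |>.2
        rw [neighborSet_eq_pair_of_ndeg_le_two (hlight _ (by simp)) h.symm h'
          (by rintro rfl; exact huq (by simp))]
        rintro w (rfl | rfl) <;> simp
    · exact (ih hq.of_cons ha (fun w hw => hlight w (by simp [hw])) v hv' hvu₁).trans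
        fun _ hw => List.mem_cons_of_mem _ hw

theorem isBridge_of_isPath_cons [Finite V] {u u₁ a : V} (h : G.Adj u u₁) {q : G.Walk u₁ a}
    (hq : (Walk.cons h q).IsPath) (ha : ndeg G a = 1)
    (hlight : ∀ v ∈ (Walk.cons h q).support, ndeg G v ≤ 2) : G.IsBridge s(u, u₁) := by
  have hu : u ∉ q.support := ((Walk.cons_isPath_iff _ _).mp hq).2
  have hclosed : ∀ v ∈ q.support, ∀ w, (G.deleteEdges {s(u, u₁)}).Adj v w → w ∈ q.support := by
    intro v hv w hvw
    rw [deleteEdges_adj, Set.mem_singleton_iff] at hvw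
    have hw : w ∈ (Walk.cons h q).support := neighborSet_subset_support_of_isPath hq ha hlight v
      (by simp [hv]) (fun hvu => hu (hvu ▸ hv)) hvw.1
    rw [Walk.support_cons, List.mem_cons] at hw
    rcases hw with rfl | hw
    · by_cases hvu₁ : v = u₁
      · exact absurd (by rw [hvu₁, Sym2.eq_swap]) hvw.2
      · exact neighborSet_subset_support_of_isPath hq.of_cons ha
          (fun x hx => hlight x (by simp [hx])) v hv hvu₁ hvw.1
    · exact hw
  exact fun hreach => hu <| mem_of_reachable_of_adj_closed (s := {w | w ∈ q.support}) hclosed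
    q.start_mem_support hreach.symm

theorem isBridge_of_mem_edges_of_isPath [Finite V] {u a : V} {q : G.Walk u a}
    (hq : q.IsPath) (ha : ndeg G a = 1) (hlight : ∀ v ∈ q.support, ndeg G v ≤ 2) :
    ∀ e ∈ q.edges, G.IsBridge e := by
  induction q with
  | nil => simp
  | cons h q ih =>
    intro e he
    rw [Walk.edges_cons, List.mem_cons] at he
    rcases he with rfl | he
    · exact isBridge_of_isPath_cons h hq ha hlight
    · exact ih hq.of_cons ha (fun v hv => hlight v (by simp [hv])) e he

end Vines

/-- **Lemma (Statement 9).** Let `S` (here the path `p`) be a vine of a graph `G`.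
Then `S` is a subgraph of every minimum path covering of `G`: all its edges lie on
paths of the covering. -/
theorem vine_subgraph_of_minPathCover {V : Type*} [Fintype V] (G : SimpleGraph V)
    {a b : V} (p : G.Walk a b) (hp : IsVine G p)
    (H : SimpleGraph V) (hH : IsMinPathCover G H) :
    ∀ e ∈ p.edges, e ∈ H.edgeSet := by
  obtain ⟨hpath, hleaf, hlight, -⟩ := hp
  intro e he
  induction e using Sym2.ind with | _ x y => ?_
  have hbridge : G.IsBridge s(x, y) := isBridge_of_mem_edges_of_isPath hpath.reverse hleaf
    (by simpa using hlight) _ (by simpa using he)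
  have hreach : H.Reachable x y := hH.reachable_of_adj (p.adj_of_mem_edges he)
    (hlight x (p.fst_mem_support_of_mem_edges he)) (hlight y (p.snd_mem_support_of_mem_edges he))
  exact (hbridge.anti hH.1).reachable_iff_adj.mp hreach

end PaperPC
end
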